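/- arXiv:2212.01533 — 2 statements merged into one kernel-verified Lean document; each statement's English description precedes it below -/
import Mathlib

section
/- Let X and Y be nonempty finite sets and let μ and ν be normalized capacities on X and Y respectively. Then the following are equivalent: (1) both C(μ) and C(ν) are nonempty; (2) there exists π ∈ Π_Ch(μ,ν) with C(π) nonempty. -/
open Finset MeasureTheory

/-- A capacity on a finite set `Z`: a monotone set function vanishing on `∅`. -/
def IsCapacity {Z : Type*} (γ : Finset Z → ℝ) : Prop :=
  γ ∅ = 0 ∧ ∀ A B : Finset Z, A ⊆ B → γ A ≤ γ B

/-- A normalized capacity: a capacity with `γ(Z) = 1`. -/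
def IsNormalizedCapacity {Z : Type*} [Fintype Z] (γ : Finset Z → ℝ) : Prop :=
  IsCapacity γ ∧ γ Finset.univ = 1

/-- Membership of a capacity `π` on `X × Y` in `Π_Ch(μ, ν)`:
`π` is a capacity whose marginals are `μ` and `ν`. -/
def InPiCh {X Y : Type*} [Fintype X] [Fintype Y]
    (μ : Finset X → ℝ) (ν : Finset Y → ℝ) (π : Finset (X × Y) → ℝ) : Prop :=
  IsCapacity π ∧ (∀ A : Finset X, π (A ×ˢ Finset.univ) = μ A) ∧
    (∀ B : Finset Y, π (Finset.univ ×ˢ B) = ν B)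

/-- Membership in the core of a capacity `γ`: a weight function `w`, identified with the
additive set function `A ↦ ∑ z ∈ A, w z`, dominating `γ` setwise and agreeing at `Z`. -/
def InCore {Z : Type*} [Fintype Z] (γ : Finset Z → ℝ) (w : Z → ℝ) : Prop :=
  (∀ A : Finset Z, γ A ≤ ∑ z ∈ A, w z) ∧ (∑ z : Z, w z) = γ Finset.univ

/-!
If `w` lies in the core of a coupling `π`, its two marginals lie in the cores of `μ` and `ν`.
Conversely, let `A_S × Y` and `X × B_S` be the largest cylinders contained in `S ⊆ X × Y`
(`A_S = fullRows S`, `B_S = fullCols S`). Then `π(S) = max (μ(A_S), ν(B_S))` is a capacity with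
marginals `μ` and `ν` as soon as `μ(X) = ν(Y)`, and for `u ∈ C(μ)`, `v ∈ C(ν)` of total weight `1`
the product weight `u ⊗ v` gives both cylinders the weight of their bases, so it dominates both
terms of the maximum and lies in the core of `π`.
-/

section

variable {X Y Z : Type*}

lemma IsCapacity.nonneg {γ : Finset Z → ℝ} (hγ : IsCapacity γ) (A : Finset Z) : 0 ≤ γ A :=
  hγ.1 ▸ hγ.2 ∅ A (empty_subset A)

variable [Fintype X] [Fintype Y] [Fintype Z]

lemma IsNormalizedCapacity.nonempty {γ : Finset Z → ℝ} (hγ : IsNormalizedCapacity γ) :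
    Nonempty Z := by
  by_contra hZ
  have h : γ univ = γ ∅ := by rw [univ_eq_empty_iff.mpr (not_nonempty_iff.mp hZ)]
  linarith [hγ.1.1, hγ.2]

lemma InCore.nonneg {γ : Finset Z → ℝ} {w : Z → ℝ} (hγ : IsCapacity γ) (hw : InCore γ w)
    (z : Z) : 0 ≤ w z := by
  simpa using (hγ.nonneg {z}).trans (hw.1 {z})

lemma InCore.marginal_fst {μ : Finset X → ℝ} {π : Finset (X × Y) → ℝ} {w : X × Y → ℝ}
    (hπ : ∀ A : Finset X, π (A ×ˢ univ) = μ A) (hw : InCore π w) :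
    InCore μ (fun x => ∑ y, w (x, y)) := by
  refine ⟨fun A => ?_, ?_⟩
  · simpa only [hπ, sum_product] using hw.1 (A ×ˢ univ)
  · rw [← Fintype.sum_prod_type, hw.2, ← univ_product_univ, hπ]

lemma InCore.marginal_snd {ν : Finset Y → ℝ} {π : Finset (X × Y) → ℝ} {w : X × Y → ℝ}
    (hπ : ∀ B : Finset Y, π (univ ×ˢ B) = ν B) (hw : InCore π w) :
    InCore ν (fun y => ∑ x, w (x, y)) := by
  refine ⟨fun B => ?_, ?_⟩
  · simpa only [hπ, sum_product_right] using hw.1 (univ ×ˢ B)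
  · rw [← Fintype.sum_prod_type_right, hw.2, ← univ_product_univ, hπ]

section Cylinders

variable [DecidableEq X] [DecidableEq Y]

def fullRows (S : Finset (X × Y)) : Finset X := {x | ∀ y, (x, y) ∈ S}

def fullCols (S : Finset (X × Y)) : Finset Y := {y | ∀ x, (x, y) ∈ S}

@[simp]
lemma mem_fullRows {S : Finset (X × Y)} {x : X} : x ∈ fullRows S ↔ ∀ y, (x, y) ∈ S := by
  simp [fullRows]

@[simp]
lemma mem_fullCols {S : Finset (X × Y)} {y : Y} : y ∈ fullCols S ↔ ∀ x, (x, y) ∈ S := by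
  simp [fullCols]

lemma fullRows_mono : Monotone (fullRows : Finset (X × Y) → Finset X) :=
  fun _ _ hST _ hx => mem_fullRows.mpr fun y => hST (mem_fullRows.mp hx y)

lemma fullCols_mono : Monotone (fullCols : Finset (X × Y) → Finset Y) :=
  fun _ _ hST _ hy => mem_fullCols.mpr fun x => hST (mem_fullCols.mp hy x)

@[simp]
lemma fullRows_univ : fullRows (univ : Finset (X × Y)) = univ := by ext; simp

@[simp]
lemma fullCols_univ : fullCols (univ : Finset (X × Y)) = univ := by ext; simp

lemma fullRows_product_univ_subset (S : Finset (X × Y)) : fullRows S ×ˢ univ ⊆ S :=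
  fun p hp => mem_fullRows.mp (mem_product.mp hp).1 p.2

lemma univ_product_fullCols_subset (S : Finset (X × Y)) : univ ×ˢ fullCols S ⊆ S :=
  fun p hp => mem_fullCols.mp (mem_product.mp hp).2 p.1

@[simp]
lemma fullRows_product_univ [Nonempty Y] (A : Finset X) :
    fullRows (A ×ˢ (univ : Finset Y)) = A := by
  ext; simp

@[simp]
lemma fullCols_univ_product [Nonempty X] (B : Finset Y) :
    fullCols ((univ : Finset X) ×ˢ B) = B := by
  ext; simp

lemma eq_univ_of_fullCols_product_univ_nonempty {A : Finset X}
    (h : (fullCols (A ×ˢ (univ : Finset Y))).Nonempty) : A = univ := by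
  obtain ⟨y, hy⟩ := h
  exact eq_univ_of_forall fun x => (mem_product.mp (mem_fullCols.mp hy x)).1

lemma eq_univ_of_fullRows_univ_product_nonempty {B : Finset Y}
    (h : (fullRows ((univ : Finset X) ×ˢ B)).Nonempty) : B = univ := by
  obtain ⟨x, hx⟩ := h
  exact eq_univ_of_forall fun y => (mem_product.mp (mem_fullRows.mp hx y)).2

def maxCoupling (μ : Finset X → ℝ) (ν : Finset Y → ℝ) (S : Finset (X × Y)) : ℝ :=
  max (μ (fullRows S)) (ν (fullCols S))

variable {μ : Finset X → ℝ} {ν : Finset Y → ℝ}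

lemma maxCoupling_mono (hμ : IsCapacity μ) (hν : IsCapacity ν) :
    Monotone (maxCoupling μ ν) :=
  fun _ _ hST => max_le_max (hμ.2 _ _ (fullRows_mono hST)) (hν.2 _ _ (fullCols_mono hST))

lemma maxCoupling_product_univ [Nonempty Y] (hμ : IsCapacity μ) (hν : IsCapacity ν)
    (huniv : ν univ ≤ μ univ) (A : Finset X) : maxCoupling μ ν (A ×ˢ univ) = μ A := by
  rw [maxCoupling, fullRows_product_univ, max_eq_left_iff]
  rcases (fullCols (A ×ˢ (univ : Finset Y))).eq_empty_or_nonempty with h | h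
  · rw [h, hν.1]
    exact hμ.nonneg A
  · rw [eq_univ_of_fullCols_product_univ_nonempty h]
    exact (hν.2 _ _ (subset_univ _)).trans huniv

lemma maxCoupling_univ_product [Nonempty X] (hμ : IsCapacity μ) (hν : IsCapacity ν)
    (huniv : μ univ ≤ ν univ) (B : Finset Y) : maxCoupling μ ν (univ ×ˢ B) = ν B := by
  rw [maxCoupling, fullCols_univ_product, max_eq_right_iff]
  rcases (fullRows ((univ : Finset X) ×ˢ B)).eq_empty_or_nonempty with h | h
  · rw [h, hμ.1]
    exact hν.nonneg B
  · rw [eq_univ_of_fullRows_univ_product_nonempty h]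
    exact (hμ.2 _ _ (subset_univ _)).trans huniv

lemma inPiCh_maxCoupling [Nonempty X] [Nonempty Y] (hμ : IsCapacity μ) (hν : IsCapacity ν)
    (huniv : μ univ = ν univ) : InPiCh μ ν (maxCoupling μ ν) := by
  have hX := maxCoupling_product_univ hμ hν huniv.ge
  refine ⟨⟨?_, fun _ _ hST => maxCoupling_mono hμ hν hST⟩, hX,
    maxCoupling_univ_product hμ hν huniv.le⟩
  rw [← empty_product (univ : Finset Y), hX, hμ.1]

lemma apply_fullRows_le_sum_mul {u : X → ℝ} {v : Y → ℝ} (hμ : IsCapacity μ) (hν : IsCapacity ν)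
    (hu : InCore μ u) (hv : InCore ν v) (hv1 : ∑ y, v y = 1) (S : Finset (X × Y)) :
    μ (fullRows S) ≤ ∑ p ∈ S, u p.1 * v p.2 :=
  calc μ (fullRows S) ≤ ∑ x ∈ fullRows S, u x := hu.1 _
    _ = ∑ p ∈ fullRows S ×ˢ univ, u p.1 * v p.2 := by
      simp only [sum_product, ← mul_sum, hv1, mul_one]
    _ ≤ ∑ p ∈ S, u p.1 * v p.2 :=
      sum_le_sum_of_subset_of_nonneg (fullRows_product_univ_subset S) fun _ _ _ =>
        mul_nonneg (hu.nonneg hμ _) (hv.nonneg hν _)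

lemma apply_fullCols_le_sum_mul {u : X → ℝ} {v : Y → ℝ} (hμ : IsCapacity μ) (hν : IsCapacity ν)
    (hu : InCore μ u) (hv : InCore ν v) (hu1 : ∑ x, u x = 1) (S : Finset (X × Y)) :
    ν (fullCols S) ≤ ∑ p ∈ S, u p.1 * v p.2 :=
  calc ν (fullCols S) ≤ ∑ y ∈ fullCols S, v y := hv.1 _
    _ = ∑ p ∈ univ ×ˢ fullCols S, u p.1 * v p.2 := by
      simp only [sum_product_right, ← sum_mul, hu1, one_mul]
    _ ≤ ∑ p ∈ S, u p.1 * v p.2 :=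
      sum_le_sum_of_subset_of_nonneg (univ_product_fullCols_subset S) fun _ _ _ =>
        mul_nonneg (hu.nonneg hμ _) (hv.nonneg hν _)

lemma inCore_maxCoupling {u : X → ℝ} {v : Y → ℝ} (hμ : IsNormalizedCapacity μ)
    (hν : IsNormalizedCapacity ν) (hu : InCore μ u) (hv : InCore ν v) :
    InCore (maxCoupling μ ν) (fun p => u p.1 * v p.2) := by
  have hu1 : ∑ x, u x = 1 := hu.2.trans hμ.2
  have hv1 : ∑ y, v y = 1 := hv.2.trans hν.2
  refine ⟨fun S => max_le (apply_fullRows_le_sum_mul hμ.1 hν.1 hu hv hv1 S)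
    (apply_fullCols_le_sum_mul hμ.1 hν.1 hu hv hu1 S), ?_⟩
  rw [maxCoupling, fullRows_univ, fullCols_univ, hμ.2, hν.2, max_self, Fintype.sum_prod_type,
    ← Fintype.sum_mul_sum, hu1, hv1, mul_one]

end Cylinders

end

theorem piCh_core_nonempty_iff_general {X Y : Type*} [Fintype X] [Fintype Y]
    (μ : Finset X → ℝ) (ν : Finset Y → ℝ)
    (hμ : IsNormalizedCapacity μ) (hν : IsNormalizedCapacity ν) :
    ((∃ u : X → ℝ, InCore μ u) ∧ (∃ v : Y → ℝ, InCore ν v)) ↔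
      (∃ π : Finset (X × Y) → ℝ, InPiCh μ ν π ∧ ∃ w : X × Y → ℝ, InCore π w) := by
  classical
  have := hμ.nonempty
  have := hν.nonempty
  constructor
  · rintro ⟨⟨u, hu⟩, ⟨v, hv⟩⟩
    exact ⟨maxCoupling μ ν, inPiCh_maxCoupling hμ.1 hν.1 (hμ.2.trans hν.2.symm), _,
      inCore_maxCoupling hμ hν hu hv⟩
  · rintro ⟨π, ⟨-, hπX, hπY⟩, w, hw⟩
    exact ⟨⟨_, hw.marginal_fst hπX⟩, ⟨_, hw.marginal_snd hπY⟩⟩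

/-- `C(μ)` and `C(ν)` are both nonempty if and only if there exists
`π ∈ Π_Ch(μ, ν)` with nonempty core. -/
theorem piCh_core_nonempty_iff {X Y : Type*} [Fintype X] [Fintype Y] [Nonempty X] [Nonempty Y]
    (μ : Finset X → ℝ) (ν : Finset Y → ℝ)
    (hμ : IsNormalizedCapacity μ) (hν : IsNormalizedCapacity ν) :
    ((∃ u : X → ℝ, InCore μ u) ∧ (∃ v : Y → ℝ, InCore ν v)) ↔
      (∃ π : Finset (X × Y) → ℝ, InPiCh μ ν π ∧ ∃ w : X × Y → ℝ, InCore π w) :=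
  piCh_core_nonempty_iff_general μ ν hμ hν
end

section
/- Let X and Y be nonempty finite sets and let μ and ν be normalized capacities on X and Y respectively, with π_*(N) = max(μ(Ñ_X), ν(Ñ_Y)) and π^*(N) = min(μ(N_X), ν(N_Y)). Then: (1) if C(π^*) is nonempty, then C(π) is nonempty for every π ∈ Π_Ch(μ,ν); and (2) if C(π_*) is empty, then C(π) is empty for every π ∈ Π_Ch(μ,ν). -/
open Finset MeasureTheory

/-- Projection of `N ⊆ X × Y` onto `X`. -/
def projX {X Y : Type*} [DecidableEq X] (N : Finset (X × Y)) : Finset X :=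
  N.image Prod.fst

/-- Projection of `N ⊆ X × Y` onto `Y`. -/
def projY {X Y : Type*} [DecidableEq Y] (N : Finset (X × Y)) : Finset Y :=
  N.image Prod.snd

/-- Full-fiber projection of `N ⊆ X × Y` onto `X`: points `x` with `(x, y) ∈ N` for all `y`. -/
def tprojX {X Y : Type*} [Fintype X] [Fintype Y] [DecidableEq X] [DecidableEq Y]
    (N : Finset (X × Y)) : Finset X :=
  Finset.univ.filter (fun x => ∀ y : Y, (x, y) ∈ N)

/-- Full-fiber projection of `N ⊆ X × Y` onto `Y`: points `y` with `(x, y) ∈ N` for all `x`. -/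
def tprojY {X Y : Type*} [Fintype X] [Fintype Y] [DecidableEq X] [DecidableEq Y]
    (N : Finset (X × Y)) : Finset Y :=
  Finset.univ.filter (fun y => ∀ x : X, (x, y) ∈ N)

/-
Every `π ∈ Π_Ch(μ, ν)` is squeezed between `π_*` and `π^*`, by monotonicity of `π` applied to
`Ñ_X × Y ⊆ N ⊆ N_X × Y` and its `Y`-analogue, and all three take the value `μ(X) = ν(Y)` on `X × Y`.
Cores are antitone under such an order with a common total value, so `C(π^*) ⊆ C(π) ⊆ C(π_*)`.
-/

theorem InCore.of_le {Z : Type*} [Fintype Z] {γ γ' : Finset Z → ℝ} {w : Z → ℝ}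
    (hle : ∀ A, γ A ≤ γ' A) (huniv : γ univ = γ' univ) (hw : InCore γ' w) : InCore γ w :=
  ⟨fun A => (hle A).trans (hw.1 A), hw.2.trans huniv.symm⟩

section Projections

variable {X Y : Type*}

theorem subset_projX_product_univ [Fintype Y] [DecidableEq X] (N : Finset (X × Y)) :
    N ⊆ projX N ×ˢ univ :=
  fun _ hp => mem_product.2 ⟨mem_image_of_mem Prod.fst hp, mem_univ _⟩

theorem subset_univ_product_projY [Fintype X] [DecidableEq Y] (N : Finset (X × Y)) :
    N ⊆ univ ×ˢ projY N :=
  fun _ hp => mem_product.2 ⟨mem_univ _, mem_image_of_mem Prod.snd hp⟩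

theorem projX_univ [Fintype X] [Fintype Y] [Nonempty Y] [DecidableEq X] :
    projX (univ : Finset (X × Y)) = univ :=
  image_univ_of_surjective Prod.fst_surjective

theorem projY_univ [Fintype X] [Fintype Y] [Nonempty X] [DecidableEq Y] :
    projY (univ : Finset (X × Y)) = univ :=
  image_univ_of_surjective Prod.snd_surjective

variable [Fintype X] [Fintype Y] [DecidableEq X] [DecidableEq Y]

theorem tprojX_product_univ_subset (N : Finset (X × Y)) : tprojX N ×ˢ univ ⊆ N := by
  intro p hp
  simpa [tprojX] using (mem_filter.1 (mem_product.1 hp).1).2 p.2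

theorem univ_product_tprojY_subset (N : Finset (X × Y)) : univ ×ˢ tprojY N ⊆ N := by
  intro p hp
  simpa [tprojY] using (mem_filter.1 (mem_product.1 hp).2).2 p.1

theorem tprojX_univ : tprojX (univ : Finset (X × Y)) = univ := by
  ext; simp [tprojX]

theorem tprojY_univ : tprojY (univ : Finset (X × Y)) = univ := by
  ext; simp [tprojY]

end Projections

namespace InPiCh

variable {X Y : Type*} [Fintype X] [Fintype Y]
  {μ : Finset X → ℝ} {ν : Finset Y → ℝ} {π : Finset (X × Y) → ℝ}

theorem apply_univ_eq_left (hπ : InPiCh μ ν π) : π univ = μ univ := by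
  rw [← hπ.2.1 univ, univ_product_univ]

theorem apply_univ_eq_right (hπ : InPiCh μ ν π) : π univ = ν univ := by
  rw [← hπ.2.2 univ, univ_product_univ]

variable [DecidableEq X] [DecidableEq Y]

theorem le_min_proj (hπ : InPiCh μ ν π) (N : Finset (X × Y)) :
    π N ≤ min (μ (projX N)) (ν (projY N)) := by
  rw [← hπ.2.1, ← hπ.2.2]
  exact le_min (hπ.1.2 _ _ (subset_projX_product_univ N))
    (hπ.1.2 _ _ (subset_univ_product_projY N))

theorem max_tproj_le (hπ : InPiCh μ ν π) (N : Finset (X × Y)) :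
    max (μ (tprojX N)) (ν (tprojY N)) ≤ π N := by
  rw [← hπ.2.1, ← hπ.2.2]
  exact max_le (hπ.1.2 _ _ (tprojX_product_univ_subset N))
    (hπ.1.2 _ _ (univ_product_tprojY_subset N))

end InPiCh

theorem core_piUpper_piLower_transfer_general {X Y : Type*} [Fintype X] [Fintype Y]
    [Nonempty X] [Nonempty Y] [DecidableEq X] [DecidableEq Y]
    (μ : Finset X → ℝ) (ν : Finset Y → ℝ) :
    ((∃ w : X × Y → ℝ,
        InCore (fun N : Finset (X × Y) => min (μ (projX N)) (ν (projY N))) w) →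
      ∀ π : Finset (X × Y) → ℝ, InPiCh μ ν π → ∃ w : X × Y → ℝ, InCore π w) ∧
    ((¬ ∃ w : X × Y → ℝ,
        InCore (fun N : Finset (X × Y) => max (μ (tprojX N)) (ν (tprojY N))) w) →
      ∀ π : Finset (X × Y) → ℝ, InPiCh μ ν π → ¬ ∃ w : X × Y → ℝ, InCore π w) := by
  constructor
  · rintro ⟨w, hw⟩ π hπ
    refine ⟨w, hw.of_le hπ.le_min_proj ?_⟩
    rw [projX_univ, projY_univ, ← hπ.apply_univ_eq_left, ← hπ.apply_univ_eq_right, min_self]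
  · rintro hempty π hπ ⟨w, hw⟩
    refine hempty ⟨w, hw.of_le hπ.max_tproj_le ?_⟩
    rw [tprojX_univ, tprojY_univ, ← hπ.apply_univ_eq_left, ← hπ.apply_univ_eq_right, max_self]

/-- (1) if `C(π^*)` is nonempty then every `π ∈ Π_Ch(μ, ν)` has nonempty core;
(2) if `C(π_*)` is empty then every `π ∈ Π_Ch(μ, ν)` has empty core. -/
theorem core_piUpper_piLower_transfer {X Y : Type*} [Fintype X] [Fintype Y]
    [Nonempty X] [Nonempty Y] [DecidableEq X] [DecidableEq Y]
    (μ : Finset X → ℝ) (ν : Finset Y → ℝ)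
    (hμ : IsNormalizedCapacity μ) (hν : IsNormalizedCapacity ν) :
    ((∃ w : X × Y → ℝ,
        InCore (fun N : Finset (X × Y) => min (μ (projX N)) (ν (projY N))) w) →
      ∀ π : Finset (X × Y) → ℝ, InPiCh μ ν π → ∃ w : X × Y → ℝ, InCore π w) ∧
    ((¬ ∃ w : X × Y → ℝ,
        InCore (fun N : Finset (X × Y) => max (μ (tprojX N)) (ν (tprojY N))) w) →
      ∀ π : Finset (X × Y) → ℝ, InPiCh μ ν π → ¬ ∃ w : X × Y → ℝ, InCore π w) :=
  core_piUpper_piLower_transfer_general μ ν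
end
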